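/- arXiv:2211.09874 — 10 statements merged into one kernel-verified Lean document; each statement's English description precedes it below -/
import Mathlib

section
/- Let a, b, c be pairwise relatively prime positive integers and set 𝔠 := 2abc − ab − ac − bc + 1. Every element s of the numerical semigroup S = ⟨ab, ac, bc⟩ with s < 𝔠 that admits more than one factorization is of the form s = abc + x·ab + y·ac + z·bc for some natural numbers x, y, z with 0 ≤ x ≤ c−1, 0 ≤ y ≤ b−1, 0 ≤ z ≤ a−1; moreover, the set of all factorizations of such an s is exactly {(c+x, y, z), (x, b+y, z), (x, y, a+z)}, so s admits exactly three factorizations. -/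
/-!
Fix one factorization `v` of `s`. Reducing modulo `c`, `b`, `a` (each coprime to the
generator it does not divide) shows that every factorization of `s` has the same residues
`(x, y, z)` as `v`, so it is `(x + c i, y + b j, z + a k)` and
`s = x·ab + y·ac + z·bc + (i + j + k)·abc`. Hence the height `i + j + k` is the same for all
factorizations. Below the conductor, `s < 2abc`, so the height is at most `1`; height `0`
leaves a single factorization, and height `1` leaves exactly the three listed.
-/

theorem Nat.ModEq.of_mul_add_mul_eq {g m p q t t' : ℕ} (hg : g.Coprime m)
    (h : p * g + m * t = q * g + m * t') : p ≡ q [MOD m] := by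
  have hmod : p * g ≡ q * g [MOD m] := by
    simpa [Nat.ModEq, Nat.add_mul_mod_self_left] using congrArg (· % m) h
  exact hmod.cancel_right_of_coprime hg.symm

namespace SemigroupABC

variable {a b c : ℕ}

def factorValue (a b c : ℕ) (v : ℕ × ℕ × ℕ) : ℕ :=
  v.1 * (a * b) + v.2.1 * (a * c) + v.2.2 * (b * c)

def residue (a b c : ℕ) (v : ℕ × ℕ × ℕ) : ℕ × ℕ × ℕ :=
  (v.1 % c, v.2.1 % b, v.2.2 % a)

def height (a b c : ℕ) (v : ℕ × ℕ × ℕ) : ℕ :=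
  v.1 / c + v.2.1 / b + v.2.2 / a

theorem factorValue_eq_residue_add_height (v : ℕ × ℕ × ℕ) :
    factorValue a b c v = factorValue a b c (residue a b c v) + height a b c v * (a * b * c) := by
  obtain ⟨x, y, z⟩ := v
  have hx := Nat.mod_add_div x c
  have hy := Nat.mod_add_div y b
  have hz := Nat.mod_add_div z a
  simp only [factorValue, residue, height]
  conv_lhs => rw [← hx, ← hy, ← hz]
  ring

theorem residue_eq_of_factorValue_eq (hab : a.Coprime b) (hac : a.Coprime c)
    (hbc : b.Coprime c) {u v : ℕ × ℕ × ℕ} (h : factorValue a b c u = factorValue a b c v) :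
    residue a b c u = residue a b c v := by
  simp only [factorValue] at h
  have hx : u.1 ≡ v.1 [MOD c] :=
    Nat.ModEq.of_mul_add_mul_eq (t := u.2.1 * a + u.2.2 * b) (t' := v.2.1 * a + v.2.2 * b)
      (hac.mul_left hbc) (by linarith)
  have hy : u.2.1 ≡ v.2.1 [MOD b] :=
    Nat.ModEq.of_mul_add_mul_eq (t := u.1 * a + u.2.2 * c) (t' := v.1 * a + v.2.2 * c)
      (hab.mul_left hbc.symm) (by linarith)
  have hz : u.2.2 ≡ v.2.2 [MOD a] :=
    Nat.ModEq.of_mul_add_mul_eq (t := u.1 * b + u.2.1 * c) (t' := v.1 * b + v.2.1 * c)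
      (hab.symm.mul_left hac.symm) (by linarith)
  simp only [residue, Prod.mk.injEq]
  exact ⟨hx, hy, hz⟩

theorem factorValue_eq_iff (ha : 0 < a) (hb : 0 < b) (hc : 0 < c) (hab : a.Coprime b)
    (hac : a.Coprime c) (hbc : b.Coprime c) (u v : ℕ × ℕ × ℕ) :
    factorValue a b c u = factorValue a b c v ↔
      residue a b c u = residue a b c v ∧ height a b c u = height a b c v := by
  constructor
  · intro h
    have hres := residue_eq_of_factorValue_eq hab hac hbc h
    rw [factorValue_eq_residue_add_height u, factorValue_eq_residue_add_height v, hres,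
      Nat.add_left_cancel_iff] at h
    exact ⟨hres, Nat.eq_of_mul_eq_mul_right (by positivity) h⟩
  · rintro ⟨hres, hheight⟩
    rw [factorValue_eq_residue_add_height u, factorValue_eq_residue_add_height v, hres, hheight]

theorem eq_residue_of_height_eq_zero {v : ℕ × ℕ × ℕ} (h : height a b c v = 0) :
    v = residue a b c v := by
  obtain ⟨x, y, z⟩ := v
  simp only [height, Nat.add_eq_zero_iff] at h
  obtain ⟨⟨hx, hy⟩, hz⟩ := h
  simp only [residue, Prod.mk.injEq]
  refine ⟨?_, ?_, ?_⟩
  · simpa [hx] using (Nat.mod_add_div x c).symm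
  · simpa [hy] using (Nat.mod_add_div y b).symm
  · simpa [hz] using (Nat.mod_add_div z a).symm

theorem height_le_one_of_factorValue_lt {v : ℕ × ℕ × ℕ}
    (h : factorValue a b c v < 2 * (a * b * c)) : height a b c v ≤ 1 := by
  by_contra! hv
  have := factorValue_eq_residue_add_height (a := a) (b := b) (c := c) v
  nlinarith

theorem residue_eq_and_height_eq_one_iff {x y z : ℕ} (hx : x < c) (hy : y < b) (hz : z < a)
    (u : ℕ × ℕ × ℕ) :
    residue a b c u = (x, y, z) ∧ height a b c u = 1 ↔
      u = (c + x, y, z) ∨ u = (x, b + y, z) ∨ u = (x, y, a + z) := by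
  obtain ⟨p, q, t⟩ := u
  simp only [residue, height, Prod.mk.injEq]
  constructor
  · rintro ⟨⟨rfl, rfl, rfl⟩, h⟩
    have hp := Nat.mod_add_div p c
    have hq := Nat.mod_add_div q b
    have ht := Nat.mod_add_div t a
    generalize p / c = i at *
    generalize q / b = j at *
    generalize t / a = k at *
    rcases (by omega : (i = 1 ∧ j = 0 ∧ k = 0) ∨ (i = 0 ∧ j = 1 ∧ k = 0) ∨
        (i = 0 ∧ j = 0 ∧ k = 1)) with ⟨rfl, rfl, rfl⟩ | ⟨rfl, rfl, rfl⟩ | ⟨rfl, rfl, rfl⟩ <;>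
      omega
  · rintro (⟨rfl, rfl, rfl⟩ | ⟨rfl, rfl, rfl⟩ | ⟨rfl, rfl, rfl⟩) <;>
      simp [Nat.mod_eq_of_lt, Nat.div_eq_of_lt, Nat.add_div_left, hx, hy, hz, hx.pos, hy.pos,
        hz.pos]

end SemigroupABC

open SemigroupABC in
/-- For pairwise coprime positive `a, b, c`, every element `s` of
`S = ⟨ab, ac, bc⟩` below the conductor `𝔠 = 2abc − ab − ac − bc + 1` admitting more
than one factorization is of the form `s = abc + x·ab + y·ac + z·bc` with
`x ≤ c−1`, `y ≤ b−1`, `z ≤ a−1`, and its set of factorizations is exactly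
`{(c+x, y, z), (x, b+y, z), (x, y, a+z)}`. -/
theorem stmt_0 (a b c : ℕ) (ha : 0 < a) (hb : 0 < b) (hc : 0 < c)
    (hab : Nat.Coprime a b) (hac : Nat.Coprime a c) (hbc : Nat.Coprime b c)
    (s : ℕ) (hs : (s : ℤ) < 2 * (a : ℤ) * b * c - a * b - a * c - b * c + 1)
    (hmulti : ∃ v w : ℕ × ℕ × ℕ, v ≠ w ∧
      v.1 * (a * b) + v.2.1 * (a * c) + v.2.2 * (b * c) = s ∧
      w.1 * (a * b) + w.2.1 * (a * c) + w.2.2 * (b * c) = s) :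
    ∃ x y z : ℕ, x ≤ c - 1 ∧ y ≤ b - 1 ∧ z ≤ a - 1 ∧
      s = a * b * c + x * (a * b) + y * (a * c) + z * (b * c) ∧
      {v : ℕ × ℕ × ℕ | v.1 * (a * b) + v.2.1 * (a * c) + v.2.2 * (b * c) = s} =
        ({(c + x, y, z), (x, b + y, z), (x, y, a + z)} : Set (ℕ × ℕ × ℕ)) := by
  obtain ⟨v, w, hvw, hv, hw⟩ := hmulti
  have hfac : ∀ u, factorValue a b c u = s ↔
      residue a b c u = residue a b c v ∧ height a b c u = height a b c v := fun u => by
    rw [← factorValue_eq_iff ha hb hc hab hac hbc, ← hv]; rfl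
  have hlt : factorValue a b c v < 2 * (a * b * c) := by
    have : 1 ≤ a * b := Nat.mul_pos ha hb
    rw [show factorValue a b c v = s from hv]
    zify; nlinarith
  have hheight : height a b c v = 1 := by
    refine le_antisymm (height_le_one_of_factorValue_lt hlt) (Nat.one_le_iff_ne_zero.2 ?_)
    intro h0
    obtain ⟨hres, hw0⟩ := (hfac w).1 hw
    apply hvw
    rw [eq_residue_of_height_eq_zero h0, eq_residue_of_height_eq_zero (hw0.trans h0), hres]
  refine ⟨v.1 % c, v.2.1 % b, v.2.2 % a, by have := Nat.mod_lt v.1 hc; omega,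
    by have := Nat.mod_lt v.2.1 hb; omega, by have := Nat.mod_lt v.2.2 ha; omega, ?_, ?_⟩
  · rw [← hv]
    change factorValue a b c v = _
    rw [factorValue_eq_residue_add_height v, hheight]
    simp only [factorValue, residue]; ring
  · ext u
    rw [Set.mem_ofPred_eq, ← factorValue, hfac u, hheight]
    exact residue_eq_and_height_eq_one_iff (Nat.mod_lt _ hc) (Nat.mod_lt _ hb)
      (Nat.mod_lt _ ha) u
end

section
/- Let a, b, c be pairwise relatively prime positive integers and set 𝔠 := 2abc − ab − ac − bc + 1. Every element s of the numerical semigroup S = ⟨ab, ac, bc⟩ with s < 𝔠 admits either exactly one or exactly three factorizations as a nonnegative integer combination of ab, ac, bc. -/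
/-!
Reducing a factorization `(x, y, z)` of `s` to `(x % c, y % b, z % a)` writes
`s = x₀ab + y₀ac + z₀bc + N·abc` with `N = x / c + y / b + z / a`. The residues are the same for
all factorizations of `s` (reduce modulo `c`, `b`, `a`, where `ab`, `ac`, `bc` are units), hence
so is `N`, and the factorizations of `s` are exactly `(x₀ + ci, y₀ + bj, z₀ + ak)` with
`i + j + k = N`. Below the conductor `s < 2abc`, so `N ≤ 1`, giving one or three factorizations.
-/

namespace NumericalSemigroup

def factorizations (a b c s : ℕ) : Set (ℕ × ℕ × ℕ) :=
  {v | v.1 * (a * b) + v.2.1 * (a * c) + v.2.2 * (b * c) = s}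

lemma modEq_of_mul_add_mul_eq {n c x₁ x₂ m₁ m₂ : ℕ} (hn : n.Coprime c)
    (h : x₁ * n + c * m₁ = x₂ * n + c * m₂) : x₁ ≡ x₂ [MOD c] := by
  refine Nat.ModEq.cancel_right_of_coprime (Nat.coprime_comm.mp hn) ?_
  calc x₁ * n ≡ x₁ * n + c * m₁ [MOD c] := (Nat.modEq_iff_dvd' le_self_add).mpr (by simp)
    _ = x₂ * n + c * m₂ := h
    _ ≡ x₂ * n [MOD c] := ((Nat.modEq_iff_dvd' le_self_add).mpr (by simp)).symm

section

variable {a b c : ℕ}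

lemma mod_eq_of_mul_add_mul_add_mul_eq (hab : a.Coprime b) (hac : a.Coprime c)
    (hbc : b.Coprime c) {x₁ y₁ z₁ x₂ y₂ z₂ : ℕ}
    (h : x₁ * (a * b) + y₁ * (a * c) + z₁ * (b * c) = x₂ * (a * b) + y₂ * (a * c) + z₂ * (b * c)) :
    x₁ % c = x₂ % c ∧ y₁ % b = y₂ % b ∧ z₁ % a = z₂ % a :=
  ⟨modEq_of_mul_add_mul_eq (m₁ := y₁ * a + z₁ * b) (m₂ := y₂ * a + z₂ * b)
      (Nat.Coprime.mul_left hac hbc) (by linear_combination h),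
    modEq_of_mul_add_mul_eq (m₁ := x₁ * a + z₁ * c) (m₂ := x₂ * a + z₂ * c)
      (Nat.Coprime.mul_left hab hbc.symm) (by linear_combination h),
    modEq_of_mul_add_mul_eq (m₁ := x₁ * b + y₁ * c) (m₂ := x₂ * b + y₂ * c)
      (Nat.Coprime.mul_left hab.symm hac.symm) (by linear_combination h)⟩

lemma mul_add_mul_add_mul_eq_mod_add_div (x y z : ℕ) :
    x * (a * b) + y * (a * c) + z * (b * c) =
      x % c * (a * b) + y % b * (a * c) + z % a * (b * c) + (x / c + y / b + z / a) * (a * b * c) := by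
  conv_lhs => rw [← Nat.mod_add_div x c, ← Nat.mod_add_div y b, ← Nat.mod_add_div z a]
  ring

theorem factorizations_eq_image (ha : 0 < a) (hb : 0 < b) (hc : 0 < c)
    (hab : a.Coprime b) (hac : a.Coprime c) (hbc : b.Coprime c) {x y z : ℕ} :
    factorizations a b c (x * (a * b) + y * (a * c) + z * (b * c)) =
      (fun t : ℕ × ℕ × ℕ => (x % c + c * t.1, y % b + b * t.2.1, z % a + a * t.2.2)) ''
        {t | t.1 + t.2.1 + t.2.2 = x / c + y / b + z / a} := by
  have habc : 0 < a * b * c := by positivity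
  ext ⟨p, q, r⟩
  simp only [factorizations, Set.mem_ofPred_eq, Set.mem_image, Prod.mk.injEq, Prod.exists]
  constructor
  · intro h
    obtain ⟨hp, hq, hr⟩ := mod_eq_of_mul_add_mul_add_mul_eq hab hac hbc h
    have hsum : p / c + q / b + r / a = x / c + y / b + z / a := by
      have := mul_add_mul_add_mul_eq_mod_add_div (a := a) (b := b) (c := c) p q r
      rw [h, mul_add_mul_add_mul_eq_mod_add_div, hp, hq, hr] at this
      exact (Nat.eq_of_mul_eq_mul_right habc (by omega)).symm
    refine ⟨p / c, q / b, r / a, hsum, ?_, ?_, ?_⟩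
    · rw [← hp, Nat.mod_add_div]
    · rw [← hq, Nat.mod_add_div]
    · rw [← hr, Nat.mod_add_div]
  · rintro ⟨i, j, k, hijk, rfl, rfl, rfl⟩
    rw [mul_add_mul_add_mul_eq_mod_add_div x y z, ← hijk]
    ring

theorem ncard_factorizations (ha : 0 < a) (hb : 0 < b) (hc : 0 < c)
    (hab : a.Coprime b) (hac : a.Coprime c) (hbc : b.Coprime c) (x y z : ℕ) :
    (factorizations a b c (x * (a * b) + y * (a * c) + z * (b * c))).ncard =
      {t : ℕ × ℕ × ℕ | t.1 + t.2.1 + t.2.2 = x / c + y / b + z / a}.ncard := by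
  rw [factorizations_eq_image ha hb hc hab hac hbc]
  refine Set.ncard_image_of_injective _ ?_
  rintro ⟨i, j, k⟩ ⟨i', j', k'⟩ h
  simpa only [Prod.mk.injEq, add_right_inj, mul_right_inj' ha.ne', mul_right_inj' hb.ne',
    mul_right_inj' hc.ne'] using h

lemma lt_two_mul_of_lt_conductor (ha : 0 < a) (hb : 0 < b) (hc : 0 < c) {s : ℕ}
    (hs : (s : ℤ) < 2 * (a : ℤ) * b * c - a * b - a * c - b * c + 1) : s < 2 * (a * b * c) := by
  have : (1 : ℤ) ≤ a * b := by exact_mod_cast Nat.one_le_iff_ne_zero.mpr (by positivity)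
  zify
  nlinarith [Int.natCast_nonneg (a * c), Int.natCast_nonneg (b * c)]

end

lemma ncard_setOf_sum_eq_zero : {t : ℕ × ℕ × ℕ | t.1 + t.2.1 + t.2.2 = 0}.ncard = 1 := by
  rw [Set.ncard_eq_one]
  refine ⟨(0, 0, 0), ?_⟩
  ext ⟨i, j, k⟩
  simp only [Set.mem_ofPred_eq, Set.mem_singleton_iff, Prod.mk.injEq]
  omega

lemma ncard_setOf_sum_eq_one : {t : ℕ × ℕ × ℕ | t.1 + t.2.1 + t.2.2 = 1}.ncard = 3 := by
  rw [Set.ncard_eq_three]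
  refine ⟨(1, 0, 0), (0, 1, 0), (0, 0, 1), by simp, by simp, by simp, ?_⟩
  ext ⟨i, j, k⟩
  simp only [Set.mem_ofPred_eq, Set.mem_insert_iff, Set.mem_singleton_iff, Prod.mk.injEq]
  omega

end NumericalSemigroup

/-- For pairwise coprime positive `a, b, c`, every element of
`S = ⟨ab, ac, bc⟩` strictly below the conductor `𝔠 = 2abc − ab − ac − bc + 1`
admits either exactly one or exactly three factorizations over `{ab, ac, bc}`. -/
theorem stmt_1 (a b c : ℕ) (ha : 0 < a) (hb : 0 < b) (hc : 0 < c)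
    (hab : Nat.Coprime a b) (hac : Nat.Coprime a c) (hbc : Nat.Coprime b c)
    (s : ℕ)
    (hmem : ∃ x y z : ℕ, x * (a * b) + y * (a * c) + z * (b * c) = s)
    (hs : (s : ℤ) < 2 * (a : ℤ) * b * c - a * b - a * c - b * c + 1) :
    {v : ℕ × ℕ × ℕ | v.1 * (a * b) + v.2.1 * (a * c) + v.2.2 * (b * c) = s}.ncard = 1 ∨
    {v : ℕ × ℕ × ℕ | v.1 * (a * b) + v.2.1 * (a * c) + v.2.2 * (b * c) = s}.ncard = 3 := by
  obtain ⟨x, y, z, rfl⟩ := hmem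
  have hcard := NumericalSemigroup.ncard_factorizations ha hb hc hab hac hbc x y z
  have hlt := NumericalSemigroup.lt_two_mul_of_lt_conductor ha hb hc hs
  have hN : x / c + y / b + z / a ≤ 1 := by
    rw [NumericalSemigroup.mul_add_mul_add_mul_eq_mod_add_div] at hlt
    by_contra! h2
    have := Nat.mul_le_mul_right (a * b * c) h2
    omega
  unfold NumericalSemigroup.factorizations at hcard
  rw [hcard]
  interval_cases x / c + y / b + z / a
  · exact Or.inl NumericalSemigroup.ncard_setOf_sum_eq_zero
  · exact Or.inr NumericalSemigroup.ncard_setOf_sum_eq_one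
end

section
/- Let a, b, c be pairwise relatively prime positive integers. If (x, y, z) and (x', y', z') are triples of natural numbers with x, x' ≤ c−1, y, y' ≤ b−1, z, z' ≤ a−1 and x·ab + y·ac + z·bc = x'·ab + y'·ac + z'·bc, then (x, y, z) = (x', y', z'). In other words, every natural number admits at most one factorization over {ab, ac, bc} whose three entries are bounded by c−1, b−1, a−1 respectively. -/
/-! Reducing the equation modulo `c` kills the terms `y·ac` and `z·bc`, and `ab` is a unit
modulo `c`, so `x ≡ x' [MOD c]`; since both lie in `[0, c - 1]` they are equal. The same
argument modulo `b` and modulo `a` gives `y = y'` and `z = z'`. -/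

namespace Nat

lemma modEq_of_add_mul_eq_add_mul {n u v p q : ℕ} (h : u + n * p = v + n * q) :
    u ≡ v [MOD n] :=
  calc u % n = (u + n * p) % n := (add_mul_mod_self_left u n p).symm
    _ = (v + n * q) % n := by rw [h]
    _ = v % n := add_mul_mod_self_left v n q

lemma eq_of_mul_modEq_of_le_sub_one {n k u v : ℕ} (hk : k.Coprime n)
    (hu : u ≤ n - 1) (hv : v ≤ n - 1) (h : u * k ≡ v * k [MOD n]) : u = v := by
  rcases n.eq_zero_or_pos with rfl | hn
  · omega
  · exact (h.cancel_right_of_coprime hk.symm).eq_of_lt_of_lt (by omega) (by omega)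

end Nat

theorem stmt_2_general (a b c : ℕ)
    (hab : Nat.Coprime a b) (hac : Nat.Coprime a c) (hbc : Nat.Coprime b c)
    (x y z x' y' z' : ℕ)
    (hx : x ≤ c - 1) (hy : y ≤ b - 1) (hz : z ≤ a - 1)
    (hx' : x' ≤ c - 1) (hy' : y' ≤ b - 1) (hz' : z' ≤ a - 1)
    (h : x * (a * b) + y * (a * c) + z * (b * c)
        = x' * (a * b) + y' * (a * c) + z' * (b * c)) :
    x = x' ∧ y = y' ∧ z = z' := by
  refine ⟨?_, ?_, ?_⟩
  · refine Nat.eq_of_mul_modEq_of_le_sub_one (hac.mul_left hbc) hx hx' ?_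
    exact Nat.modEq_of_add_mul_eq_add_mul (p := y * a + z * b) (q := y' * a + z' * b)
      (by linarith)
  · refine Nat.eq_of_mul_modEq_of_le_sub_one (hab.mul_left hbc.symm) hy hy' ?_
    exact Nat.modEq_of_add_mul_eq_add_mul (p := x * a + z * c) (q := x' * a + z' * c)
      (by linarith)
  · refine Nat.eq_of_mul_modEq_of_le_sub_one (hab.symm.mul_left hac.symm) hz hz' ?_
    exact Nat.modEq_of_add_mul_eq_add_mul (p := x * b + y * c) (q := x' * b + y' * c)
      (by linarith)

/-- For pairwise coprime positive `a, b, c`, any natural number admits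
at most one factorization `x·ab + y·ac + z·bc` with `x ≤ c−1`, `y ≤ b−1`, `z ≤ a−1`. -/
theorem stmt_2 (a b c : ℕ) (ha : 0 < a) (hb : 0 < b) (hc : 0 < c)
    (hab : Nat.Coprime a b) (hac : Nat.Coprime a c) (hbc : Nat.Coprime b c)
    (x y z x' y' z' : ℕ)
    (hx : x ≤ c - 1) (hy : y ≤ b - 1) (hz : z ≤ a - 1)
    (hx' : x' ≤ c - 1) (hy' : y' ≤ b - 1) (hz' : z' ≤ a - 1)
    (h : x * (a * b) + y * (a * c) + z * (b * c)
        = x' * (a * b) + y' * (a * c) + z' * (b * c)) :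
    x = x' ∧ y = y' ∧ z = z' :=
  stmt_2_general a b c hab hac hbc x y z x' y' z' hx hy hz hx' hy' hz' h
end

section
/- Let a, b, c be pairwise relatively prime positive integers and set 𝔠 := 2abc − ab − ac − bc + 1. If s is an element of the numerical semigroup S = ⟨ab, ac, bc⟩ with s < 𝔠, then every factorization (x, y, z) of s satisfies the strict inequality (x+1)/c + (y+1)/b + (z+1)/a < 2 in the rational numbers. -/
/-!
Writing `s = x·ab + y·ac + z·bc`, the hypothesis `s < 𝔠` says exactly that
`(x+1)ab + (y+1)ac + (z+1)bc ≤ 2abc`, and the claim is that this inequality is strict.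
Equality is impossible: reducing it modulo `a`, `b`, `c` and using coprimality gives
`a ∣ z+1`, `b ∣ y+1`, `c ∣ x+1`, whence the left-hand side is at least `3abc`.
-/

namespace Nat

theorem dvd_of_add_mul_eq_mul_mul_mul {a b c u v w n : ℕ} (hab : Coprime a b) (hac : Coprime a c)
    (h : u * (a * b) + v * (a * c) + w * (b * c) = n * (a * b * c)) : a ∣ w := by
  have hsum : a ∣ (u * b + v * c) * a + w * (b * c) := by
    rw [show (u * b + v * c) * a + w * (b * c) = n * (b * c) * a by linear_combination h]
    exact dvd_mul_left a _
  exact (hab.mul_right hac).dvd_of_dvd_mul_right ((Nat.dvd_add_right (dvd_mul_left a _)).mp hsum)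

theorem three_le_of_add_mul_eq_mul_mul_mul {a b c u v w n : ℕ}
    (ha : 0 < a) (hb : 0 < b) (hc : 0 < c)
    (hab : Coprime a b) (hac : Coprime a c) (hbc : Coprime b c)
    (hu : 0 < u) (hv : 0 < v) (hw : 0 < w)
    (h : u * (a * b) + v * (a * c) + w * (b * c) = n * (a * b * c)) : 3 ≤ n := by
  have ha_dvd : a ∣ w := dvd_of_add_mul_eq_mul_mul_mul hab hac h
  have hb_dvd : b ∣ v :=
    dvd_of_add_mul_eq_mul_mul_mul (u := u) (v := w) (n := n) hab.symm hbc
      (by linear_combination h)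
  have hc_dvd : c ∣ u :=
    dvd_of_add_mul_eq_mul_mul_mul (u := v) (v := w) (n := n) hac.symm hbc.symm
      (by linear_combination h)
  have hle : 3 * (a * b * c) ≤ n * (a * b * c) :=
    calc 3 * (a * b * c) = c * (a * b) + b * (a * c) + a * (b * c) := by ring
      _ ≤ u * (a * b) + v * (a * c) + w * (b * c) := by
        gcongr
        exacts [Nat.le_of_dvd hu hc_dvd, Nat.le_of_dvd hv hb_dvd, Nat.le_of_dvd hw ha_dvd]
      _ = n * (a * b * c) := h
  exact Nat.le_of_mul_le_mul_right hle (by positivity)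

end Nat

/-- For pairwise coprime positive `a, b, c`, if `s ∈ S = ⟨ab, ac, bc⟩`
is strictly below the conductor `𝔠 = 2abc − ab − ac − bc + 1`, then every
factorization `(x, y, z)` of `s` satisfies `(x+1)/c + (y+1)/b + (z+1)/a < 2` in `ℚ`. -/
theorem stmt_3 (a b c : ℕ) (ha : 0 < a) (hb : 0 < b) (hc : 0 < c)
    (hab : Nat.Coprime a b) (hac : Nat.Coprime a c) (hbc : Nat.Coprime b c)
    (s : ℕ) (hs : (s : ℤ) < 2 * (a : ℤ) * b * c - a * b - a * c - b * c + 1)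
    (x y z : ℕ) (hfac : x * (a * b) + y * (a * c) + z * (b * c) = s) :
    ((x : ℚ) + 1) / c + ((y : ℚ) + 1) / b + ((z : ℚ) + 1) / a < 2 := by
  subst hfac
  have hle : (x + 1) * (a * b) + (y + 1) * (a * c) + (z + 1) * (b * c) ≤ 2 * (a * b * c) := by
    zify; push_cast at hs; linarith
  have hlt : (x + 1) * (a * b) + (y + 1) * (a * c) + (z + 1) * (b * c) < 2 * (a * b * c) :=
    hle.lt_of_ne fun h => by
      have := Nat.three_le_of_add_mul_eq_mul_mul_mul ha hb hc hab hac hbc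
        x.succ_pos y.succ_pos z.succ_pos h
      omega
  have hltQ : ((x : ℚ) + 1) * (a * b) + ((y : ℚ) + 1) * (a * c) + ((z : ℚ) + 1) * (b * c)
      < 2 * (a * b * c) := by exact_mod_cast hlt
  rw [div_add_div _ _ (by positivity) (by positivity), div_add_div _ _ (by positivity)
    (by positivity), div_lt_iff₀ (by positivity)]
  linarith
end

section
/- Let a, b, c be pairwise relatively prime positive integers and set F := 2abc − ab − ac − bc (as an integer). Then there is no triple (x, y, z) of natural numbers with x·ab + y·ac + z·bc = F, while every integer n > F belongs to the numerical semigroup S = ⟨ab, ac, bc⟩. Consequently F is the Frobenius number of S and 𝔠 = F + 1 is its conductor. -/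
/-!
A representation of `F` would give `(x+1)ab + (y+1)ac + (z+1)bc = 2abc`; reducing modulo `a`, `b`
and `c` forces `a ∣ z+1`, `b ∣ y+1`, `c ∣ x+1`, so the left side is at least `3abc`.
For `n > F`, pick `z < a` with `n ≡ z·bc (mod a)`; then `(n - z·bc)/a` exceeds `bc - b - c`, the
Frobenius number of `⟨b, c⟩` (Sylvester), so it is of the form `xb + yc`.
-/

lemma exists_lt_dvd_sub_mul_of_coprime {a m : ℕ} (ha : 0 < a) (h : Nat.Coprime a m) (n : ℤ) :
    ∃ z : ℕ, z < a ∧ (a : ℤ) ∣ n - z * m := by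
  have : NeZero a := ⟨ha.ne'⟩
  have hm : IsUnit (m : ZMod a) := (ZMod.isUnit_iff_coprime m a).mpr h.symm
  refine ⟨((n : ZMod a) * (m : ZMod a)⁻¹).val, ZMod.val_lt _, ?_⟩
  rw [← ZMod.intCast_zmod_eq_zero_iff_dvd]
  push_cast
  rw [ZMod.natCast_val, ZMod.cast_id, mul_assoc, ZMod.inv_mul_of_unit _ hm, mul_one, sub_self]

theorem exists_nat_mul_add_mul_eq_of_lt {b c : ℕ} (hb : 0 < b) (hbc : Nat.Coprime b c) {m : ℤ}
    (hm : (b : ℤ) * c - b - c < m) : ∃ x y : ℕ, (x : ℤ) * b + (y : ℤ) * c = m := by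
  obtain ⟨y, hyb, k, hk⟩ := exists_lt_dvd_sub_mul_of_coprime hb hbc m
  have hk_nonneg : 0 ≤ k := by
    have hy : (y : ℤ) + 1 ≤ b := by exact_mod_cast hyb
    have hbk : 0 < (b : ℤ) * (k + 1) := by
      nlinarith [mul_le_mul_of_nonneg_right hy (c.cast_nonneg : (0 : ℤ) ≤ c)]
    linarith [pos_of_mul_pos_right hbk b.cast_nonneg]
  exact ⟨k.toNat, y, by rw [Int.toNat_of_nonneg hk_nonneg]; linarith⟩

theorem exists_nat_eq_of_frobenius_lt {a b c : ℕ} (ha : 0 < a) (hb : 0 < b)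
    (hab : Nat.Coprime a b) (hac : Nat.Coprime a c) (hbc : Nat.Coprime b c) {n : ℤ}
    (hn : 2 * (a : ℤ) * b * c - a * b - a * c - b * c < n) :
    ∃ x y z : ℕ, (x : ℤ) * (a * b) + (y : ℤ) * (a * c) + (z : ℤ) * (b * c) = n := by
  obtain ⟨z, hza, m, hm⟩ := exists_lt_dvd_sub_mul_of_coprime ha (hab.mul_right hac) n
  push_cast at hm
  have hm_gt : (b : ℤ) * c - b - c < m := by
    have hz : (z : ℤ) + 1 ≤ a := by exact_mod_cast hza
    refine lt_of_mul_lt_mul_left (a := (a : ℤ)) ?_ a.cast_nonneg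
    nlinarith [mul_le_mul_of_nonneg_right hz (by positivity : (0 : ℤ) ≤ b * c)]
  obtain ⟨x, y, hxy⟩ := exists_nat_mul_add_mul_eq_of_lt hb hbc hm_gt
  exact ⟨x, y, z, by linear_combination (a : ℤ) * hxy - hm⟩

lemma le_of_isCoprime_of_dvd_mul {a m k : ℤ} (h : IsCoprime a m) (hk : 0 < k) (hd : a ∣ k * m) :
    a ≤ k :=
  Int.le_of_dvd hk (h.dvd_of_dvd_mul_right hd)

lemma isCoprime_mul_of_coprime {p q r : ℕ} (hpq : Nat.Coprime p q) (hpr : Nat.Coprime p r) :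
    IsCoprime (p : ℤ) (q * r) := by
  exact_mod_cast Nat.isCoprime_iff_coprime.mpr (hpq.mul_right hpr)

theorem not_exists_nat_eq_frobenius {a b c : ℕ} (ha : 0 < a) (hb : 0 < b) (hc : 0 < c)
    (hab : Nat.Coprime a b) (hac : Nat.Coprime a c) (hbc : Nat.Coprime b c) :
    ¬ ∃ x y z : ℕ, (x : ℤ) * (a * b) + (y : ℤ) * (a * c) + (z : ℤ) * (b * c)
        = 2 * (a : ℤ) * b * c - a * b - a * c - b * c := by
  rintro ⟨x, y, z, h⟩
  have hz : (a : ℤ) ≤ z + 1 := le_of_isCoprime_of_dvd_mul (isCoprime_mul_of_coprime hab hac)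
    (by positivity) ⟨2 * b * c - (x + 1) * b - (y + 1) * c, by linear_combination h⟩
  have hy : (b : ℤ) ≤ y + 1 := le_of_isCoprime_of_dvd_mul
    (isCoprime_mul_of_coprime hab.symm hbc)
    (by positivity) ⟨2 * a * c - (x + 1) * a - (z + 1) * c, by linear_combination h⟩
  have hx : (c : ℤ) ≤ x + 1 := le_of_isCoprime_of_dvd_mul
    (isCoprime_mul_of_coprime hac.symm hbc.symm)
    (by positivity) ⟨2 * a * b - (y + 1) * a - (z + 1) * b, by linear_combination h⟩
  have habc : (0 : ℤ) < a * b * c := by positivity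
  nlinarith [mul_le_mul_of_nonneg_right hz (by positivity : (0 : ℤ) ≤ b * c),
    mul_le_mul_of_nonneg_right hy (by positivity : (0 : ℤ) ≤ a * c),
    mul_le_mul_of_nonneg_right hx (by positivity : (0 : ℤ) ≤ a * b)]

/-- For pairwise coprime positive `a, b, c` and
`F := 2abc − ab − ac − bc` (as an integer), no triple of naturals `(x, y, z)`
satisfies `x·ab + y·ac + z·bc = F`, while every integer `n > F` lies in
`S = ⟨ab, ac, bc⟩`; hence `F` is the Frobenius number of `S` and `F + 1` its conductor. -/
theorem stmt_4 (a b c : ℕ) (ha : 0 < a) (hb : 0 < b) (hc : 0 < c)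
    (hab : Nat.Coprime a b) (hac : Nat.Coprime a c) (hbc : Nat.Coprime b c) :
    (¬ ∃ x y z : ℕ, (x : ℤ) * (a * b) + (y : ℤ) * (a * c) + (z : ℤ) * (b * c)
        = 2 * (a : ℤ) * b * c - a * b - a * c - b * c) ∧
    (∀ n : ℤ, 2 * (a : ℤ) * b * c - a * b - a * c - b * c < n →
      ∃ x y z : ℕ, (x : ℤ) * (a * b) + (y : ℤ) * (a * c) + (z : ℤ) * (b * c) = n) :=
  ⟨not_exists_nat_eq_frobenius ha hb hc hab hac hbc,
    fun _ hn => exists_nat_eq_of_frobenius_lt ha hb hab hac hbc hn⟩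
end

section
/- Let a, b, c be pairwise relatively prime positive integers. The element abc of the numerical semigroup S = ⟨ab, ac, bc⟩ admits exactly three factorizations, namely (c, 0, 0), (0, b, 0) and (0, 0, a), and these three vectors in ℕ³ are pairwise orthogonal with respect to the standard inner product. In particular, abc is a Betti element of {ab, ac, bc}: its set of factorizations splits into three distinct equivalence classes under the transitive closure of the relation identifying factorizations with nonzero inner product. -/
/-- The standard inner product on `ℕ³` (written as `ℕ × ℕ × ℕ`). -/
def dot3 (v w : ℕ × ℕ × ℕ) : ℕ := v.1 * w.1 + v.2.1 * w.2.1 + v.2.2 * w.2.2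

/-- `v` is a factorization of `s` over `{ab, ac, bc}`. -/
def IsFactorization (a b c s : ℕ) (v : ℕ × ℕ × ℕ) : Prop :=
  v.1 * (a * b) + v.2.1 * (a * c) + v.2.2 * (b * c) = s

/-- Two factorizations of `s` are related when both factor `s` and their
inner product is nonzero. -/
def FacRel (a b c s : ℕ) (v w : ℕ × ℕ × ℕ) : Prop :=
  IsFactorization a b c s v ∧ IsFactorization a b c s w ∧ dot3 v w ≠ 0

/-! Reducing `x·ab + y·ac + z·bc = abc` modulo `c`, `b` and `a` shows, by pairwise coprimality,
that `c ∣ x`, `b ∣ y` and `a ∣ z`; dividing by `abc` then leaves `x/c + y/b + z/a = 1`, so exactly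
one generator is used. The three factorizations have disjoint supports, so the relation "nonzero
inner product" only relates a factorization of `abc` to itself and its equivalence closure is
equality. -/

theorem dvd_coeff_of_eq_abc {a b c x y z : ℕ} (hac : Nat.Coprime a c) (hbc : Nat.Coprime b c)
    (h : x * (a * b) + y * (a * c) + z * (b * c) = a * b * c) : c ∣ x := by
  have hdvd : c ∣ x * (a * b) + (y * (a * c) + z * (b * c)) :=
    ⟨a * b, by rw [← add_assoc, h]; ring⟩
  have hrest : c ∣ y * (a * c) + z * (b * c) := ⟨y * a + z * b, by ring⟩
  exact (hac.symm.mul_right hbc.symm).dvd_of_dvd_mul_right ((Nat.dvd_add_left hrest).mp hdvd)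

namespace IsFactorization

variable {a b c x y z : ℕ}

theorem eq_abc_iff (ha : 0 < a) (hb : 0 < b) (hc : 0 < c)
    (hab : Nat.Coprime a b) (hac : Nat.Coprime a c) (hbc : Nat.Coprime b c) :
    IsFactorization a b c (a * b * c) (x, y, z) ↔
      (x, y, z) = (c, 0, 0) ∨ (x, y, z) = (0, b, 0) ∨ (x, y, z) = (0, 0, a) := by
  simp only [IsFactorization, Prod.mk.injEq]
  constructor
  · intro h
    have hcx : c ∣ x := dvd_coeff_of_eq_abc hac hbc h
    have hby : b ∣ y := dvd_coeff_of_eq_abc (x := y) (y := x) (z := z) hab hbc.symm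
      (by linarith)
    have haz : a ∣ z := dvd_coeff_of_eq_abc (x := z) (y := y) (z := x) hac.symm hab.symm
      (by linarith)
    obtain ⟨x', rfl⟩ := hcx
    obtain ⟨y', rfl⟩ := hby
    obtain ⟨z', rfl⟩ := haz
    have hsum : x' + y' + z' = 1 := by
      refine Nat.eq_of_mul_eq_mul_left (show 0 < a * b * c by positivity) ?_
      convert h using 1 <;> ring
    rcases (by omega : (x' = 1 ∧ y' = 0 ∧ z' = 0) ∨ (x' = 0 ∧ y' = 1 ∧ z' = 0) ∨
        (x' = 0 ∧ y' = 0 ∧ z' = 1)) with ⟨rfl, rfl, rfl⟩ | ⟨rfl, rfl, rfl⟩ | ⟨rfl, rfl, rfl⟩ <;>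
      simp
  · rintro (⟨rfl, rfl, rfl⟩ | ⟨rfl, rfl, rfl⟩ | ⟨rfl, rfl, rfl⟩) <;> ring

end IsFactorization

section

variable {a b c : ℕ}

theorem setOf_isFactorization_abc (ha : 0 < a) (hb : 0 < b) (hc : 0 < c)
    (hab : Nat.Coprime a b) (hac : Nat.Coprime a c) (hbc : Nat.Coprime b c) :
    {v : ℕ × ℕ × ℕ | IsFactorization a b c (a * b * c) v} = {(c, 0, 0), (0, b, 0), (0, 0, a)} := by
  ext ⟨x, y, z⟩
  exact IsFactorization.eq_abc_iff ha hb hc hab hac hbc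

theorem FacRel.eq_of_abc (ha : 0 < a) (hb : 0 < b) (hc : 0 < c)
    (hab : Nat.Coprime a b) (hac : Nat.Coprime a c) (hbc : Nat.Coprime b c)
    {v w : ℕ × ℕ × ℕ} (h : FacRel a b c (a * b * c) v w) : v = w := by
  obtain ⟨hv, hw, hdot⟩ := h
  obtain ⟨x, y, z⟩ := v
  obtain ⟨x', y', z'⟩ := w
  rw [IsFactorization.eq_abc_iff ha hb hc hab hac hbc] at hv hw
  rcases hv with hv | hv | hv <;> rcases hw with hw | hw | hw <;> rw [hv, hw] at hdot ⊢ <;>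
    simp_all [dot3]

theorem eq_of_eqvGen_facRel_abc (ha : 0 < a) (hb : 0 < b) (hc : 0 < c)
    (hab : Nat.Coprime a b) (hac : Nat.Coprime a c) (hbc : Nat.Coprime b c) {v w : ℕ × ℕ × ℕ}
    (h : Relation.EqvGen (FacRel a b c (a * b * c)) v w) : v = w :=
  eq_equivalence.eqvGen_iff.mp (h.mono fun _ _ ↦ FacRel.eq_of_abc ha hb hc hab hac hbc)

end

/-- For pairwise coprime positive `a, b, c`, the element `abc` of
`S = ⟨ab, ac, bc⟩` has exactly the three factorizations `(c,0,0)`, `(0,b,0)`,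
`(0,0,a)`, which are pairwise orthogonal; in particular `abc` is a Betti element:
the three factorizations lie in three distinct equivalence classes under the
transitive (equivalence) closure of the relation identifying factorizations with
nonzero inner product. -/
theorem stmt_5 (a b c : ℕ) (ha : 0 < a) (hb : 0 < b) (hc : 0 < c)
    (hab : Nat.Coprime a b) (hac : Nat.Coprime a c) (hbc : Nat.Coprime b c) :
    {v : ℕ × ℕ × ℕ | IsFactorization a b c (a * b * c) v} =
      ({(c, 0, 0), (0, b, 0), (0, 0, a)} : Set (ℕ × ℕ × ℕ)) ∧
    dot3 (c, 0, 0) (0, b, 0) = 0 ∧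
    dot3 (c, 0, 0) (0, 0, a) = 0 ∧
    dot3 (0, b, 0) (0, 0, a) = 0 ∧
    ¬ Relation.EqvGen (FacRel a b c (a * b * c)) (c, 0, 0) (0, b, 0) ∧
    ¬ Relation.EqvGen (FacRel a b c (a * b * c)) (c, 0, 0) (0, 0, a) ∧
    ¬ Relation.EqvGen (FacRel a b c (a * b * c)) (0, b, 0) (0, 0, a) := by
  have distinct {v w : ℕ × ℕ × ℕ} (hne : v ≠ w) :
      ¬ Relation.EqvGen (FacRel a b c (a * b * c)) v w :=
    fun h ↦ hne (eq_of_eqvGen_facRel_abc ha hb hc hab hac hbc h)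
  refine ⟨setOf_isFactorization_abc ha hb hc hab hac hbc, by simp [dot3], by simp [dot3],
    by simp [dot3], distinct ?_, distinct ?_, distinct ?_⟩ <;> simp [hc.ne', hb.ne']
end

section
/- Let a, b, c be pairwise relatively prime positive integers. Every element s of the numerical semigroup S = ⟨ab, ac, bc⟩ with s < abc admits exactly one factorization as a nonnegative integer combination of ab, ac, bc. -/
theorem eq_of_mul_add_mul_eq_of_lt_mul {K n s u u' m m' : ℕ} (hK : Nat.Coprime K n)
    (h : u * K + m * n = s) (h' : u' * K + m' * n = s) (hs : s < K * n) : u = u' := by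
  have hu : u < n := Nat.lt_of_mul_lt_mul_right (a := K) (by rw [mul_comm n]; omega)
  have hu' : u' < n := Nat.lt_of_mul_lt_mul_right (a := K) (by rw [mul_comm n]; omega)
  have hmod : u * K ≡ u' * K [MOD n] := by
    unfold Nat.ModEq
    rw [← Nat.add_mul_mod_self_right (u * K) m, ← Nat.add_mul_mod_self_right (u' * K) m', h, h']
  exact (Nat.ModEq.cancel_right_of_coprime (Nat.coprime_comm.mp hK) hmod).eq_of_lt_of_lt hu hu'

theorem stmt_6_general (a b c : ℕ)
    (hab : Nat.Coprime a b) (hac : Nat.Coprime a c) (hbc : Nat.Coprime b c)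
    (s : ℕ) (hs : s < a * b * c)
    (hmem : ∃ v : ℕ × ℕ × ℕ, v.1 * (a * b) + v.2.1 * (a * c) + v.2.2 * (b * c) = s) :
    ∃! v : ℕ × ℕ × ℕ, v.1 * (a * b) + v.2.1 * (a * c) + v.2.2 * (b * c) = s := by
  obtain ⟨⟨x, y, z⟩, hv⟩ := hmem
  refine ⟨(x, y, z), hv, ?_⟩
  rintro ⟨x', y', z'⟩ hw
  dsimp only at hv hw
  -- Modulo `c` only the `ab` term survives, and `x < c` as `s < abc`, so `x` is determined by `s`;
  -- likewise `y` modulo `b` and `z` modulo `a`.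
  have hx : x' = x := eq_of_mul_add_mul_eq_of_lt_mul (hac.mul_left hbc)
    (show x' * (a * b) + (y' * a + z' * b) * c = s by rw [← hw]; ring)
    (show x * (a * b) + (y * a + z * b) * c = s by rw [← hv]; ring) hs
  have hy : y' = y := eq_of_mul_add_mul_eq_of_lt_mul (hab.mul_left hbc.symm)
    (show y' * (a * c) + (x' * a + z' * c) * b = s by rw [← hw]; ring)
    (show y * (a * c) + (x * a + z * c) * b = s by rw [← hv]; ring) (hs.trans_eq (by ring))
  have hz : z' = z := eq_of_mul_add_mul_eq_of_lt_mul (hab.symm.mul_left hac.symm)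
    (show z' * (b * c) + (x' * b + y' * c) * a = s by rw [← hw]; ring)
    (show z * (b * c) + (x * b + y * c) * a = s by rw [← hv]; ring) (hs.trans_eq (by ring))
  rw [hx, hy, hz]

/-- For pairwise coprime positive `a, b, c`, every element `s` of
`S = ⟨ab, ac, bc⟩` with `s < abc` admits exactly one factorization over `{ab, ac, bc}`. -/
theorem stmt_6 (a b c : ℕ) (ha : 0 < a) (hb : 0 < b) (hc : 0 < c)
    (hab : Nat.Coprime a b) (hac : Nat.Coprime a c) (hbc : Nat.Coprime b c)
    (s : ℕ) (hs : s < a * b * c)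
    (hmem : ∃ v : ℕ × ℕ × ℕ, v.1 * (a * b) + v.2.1 * (a * c) + v.2.2 * (b * c) = s) :
    ∃! v : ℕ × ℕ × ℕ, v.1 * (a * b) + v.2.1 * (a * c) + v.2.2 * (b * c) = s :=
  stmt_6_general a b c hab hac hbc s hs hmem
end

section
/- Let r ≥ 1 and suppose the hyperelliptic vanishing conditions of order ≤ r−1 hold, i.e. for every i ∈ {1, …, n} and every u with 1 ≤ u ≤ r−1 the coefficient of t^{2(i+u)−1} in F*_{i,u} vanishes. Then for every finite sequence λ = (i_1, …, i_s) with entries in {1, …, n} one has the identity F*_{λ,r} = F*_{i_1,r}·f_1^{i_λ − i_1} + Σ_{q=2}^{s} ( f_{λ_{q−1}}·F*_{i_q,r}·f_1^{i_λ − i_{λ_q}} + f_1^{i_λ − i_{λ_{q−1}}}·Σ_{l=1}^{r−1} a(i_q, l)·F*_{λ_{q−1}, r−l}·f_1^{l} ) in ℂ⟦t⟧. -/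
/-- `Fstar f λ r` is the series `F*_{λ,r}`: `F*_{λ,0} = f_λ = f_{i₁}⋯f_{i_s}` and
`F*_{λ,r} = F*_{λ,r−1} − a(λ,r−1)·f₁^{i_λ+r−1}`, where `a(λ,r)` is the coefficient
of `t^{2(i_λ+r)}` in `F*_{λ,r}`. -/
noncomputable def Fstar (f : ℕ → PowerSeries ℂ) (lam : List ℕ) : ℕ → PowerSeries ℂ
  | 0 => (lam.map f).prod
  | r + 1 =>
      Fstar f lam r -
        PowerSeries.C (R := ℂ) (PowerSeries.coeff (R := ℂ) (2 * (lam.sum + r)) (Fstar f lam r)) *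
          f 1 ^ (lam.sum + r)

/-- `aCoef f λ r` is `a(λ,r)`, the coefficient of `t^{2(i_λ+r)}` in `F*_{λ,r}`. -/
noncomputable def aCoef (f : ℕ → PowerSeries ℂ) (lam : List ℕ) (r : ℕ) : ℂ :=
  PowerSeries.coeff (R := ℂ) (2 * (lam.sum + r)) (Fstar f lam r)

/-!
`F*_{λ,u} = f_λ − Σ_{k<u} a(λ,k)·f₁^{i_λ+k}` is the remainder of the truncated `f₁`-adic
expansion of `f_λ`. Since `f₁ = t² + O(t³)`, it is the only such remainder whose coefficients at
`t^{2(i_λ+k)}`, `k < u`, vanish. Multiplying the expansions of `f_μ` and `f_j` (the coefficients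
multiply as a Cauchy product) therefore identifies `F*_{μj,u}`, which is the formula for
`λ = μj`; the general formula is this two-term identity telescoped along the prefixes `λ_q`.
What makes the remainders vanish at those coefficients is the bound `t^{2(i_λ+u)−1} ∣ F*_{λ,u}`
for `u ≤ r`: for one letter it comes from the vanishing hypotheses, and it passes from `μ` and
`j` to `μj`.
-/

open PowerSeries Finset

section PowerSeries

variable {R : Type*} [CommSemiring R]

lemma coeff_mul_pow_of_X_pow_dvd {g : R⟦X⟧} {a : ℕ} (h : X ^ a ∣ g) (k : ℕ) :
    coeff (a * k) (g ^ k) = coeff a g ^ k := by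
  obtain ⟨e, rfl⟩ := h
  rw [mul_pow, ← pow_mul, coeff_X_pow_mul', if_pos le_rfl, coeff_X_pow_mul', if_pos le_rfl,
    Nat.sub_self, Nat.sub_self, coeff_zero_eq_constantCoeff, map_pow]

lemma coeff_mul_pow_eq_one {g : R⟦X⟧} {a : ℕ} (h : X ^ a ∣ g) (h' : coeff a g = 1) (k : ℕ) :
    coeff (a * k) (g ^ k) = 1 := by
  rw [coeff_mul_pow_of_X_pow_dvd h, h', one_pow]

lemma X_pow_mul_dvd_pow {g : R⟦X⟧} {a : ℕ} (h : X ^ a ∣ g) (k : ℕ) : X ^ (a * k) ∣ g ^ k :=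
  pow_mul (X : R⟦X⟧) a k ▸ pow_dvd_pow_of_dvd h k

lemma coeff_pow_eq_zero_of_lt {g : R⟦X⟧} {a m k : ℕ} (h : X ^ a ∣ g) (hm : m < a * k) :
    coeff m (g ^ k) = 0 :=
  X_pow_dvd_iff.1 (X_pow_mul_dvd_pow h k) m hm

end PowerSeries

lemma Finset.sum_Icc_succ_sub_pred {M : Type*} [AddCommGroup M] (Φ : ℕ → M) {a b : ℕ}
    (hab : a ≤ b) : ∑ q ∈ Icc (a + 1) b, (Φ q - Φ (q - 1)) = Φ b - Φ a := by
  induction b, hab using Nat.le_induction with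
  | base => simp
  | succ b hab ih =>
    rw [sum_Icc_succ_top (by omega), ih, Nat.add_sub_cancel]
    abel

section Fstar

variable {f : ℕ → ℂ⟦X⟧} {lam : List ℕ}

lemma Fstar_succ (u : ℕ) :
    Fstar f lam (u + 1) = Fstar f lam u - C (aCoef f lam u) * f 1 ^ (lam.sum + u) :=
  rfl

lemma prod_eq_Fstar_add_sum (u : ℕ) :
    (lam.map f).prod = Fstar f lam u + ∑ k ∈ range u, C (aCoef f lam k) * f 1 ^ (lam.sum + k) := by
  induction u with
  | zero => simp [Fstar]
  | succ u ih =>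
    rw [Fstar_succ, sum_range_succ, ih]
    abel

lemma prod_append_singleton_eq_add_sum (μ : List ℕ) (j u : ℕ) :
    ((μ ++ [j]).map f).prod = (μ.map f).prod * Fstar f [j] u +
      ∑ l ∈ range u, C (aCoef f [j] l) * Fstar f μ (u - l) * f 1 ^ (j + l) +
      ∑ m ∈ range u, C (∑ k ∈ range (m + 1), aCoef f [j] k * aCoef f μ (m - k)) *
        f 1 ^ ((μ ++ [j]).sum + m) := by
  have hμexp : ∀ l ∈ range u, C (aCoef f [j] l) * (μ.map f).prod * f 1 ^ (j + l) =
      C (aCoef f [j] l) * Fstar f μ (u - l) * f 1 ^ (j + l) +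
        ∑ k ∈ range (u - l), C (aCoef f [j] l * aCoef f μ k) * f 1 ^ (μ.sum + j + (l + k)) := by
    intro l _
    rw [prod_eq_Fstar_add_sum (u - l), mul_add, add_mul, mul_sum, sum_mul]
    congr 1
    refine sum_congr rfl fun k _ => ?_
    rw [map_mul]
    ring
  calc ((μ ++ [j]).map f).prod
      = (μ.map f).prod * (Fstar f [j] u + ∑ l ∈ range u, C (aCoef f [j] l) * f 1 ^ (j + l)) := by
        have hj := prod_eq_Fstar_add_sum (f := f) (lam := [j]) u
        simp only [List.map_cons, List.map_nil, List.prod_cons, List.prod_nil, mul_one,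
          List.sum_cons, List.sum_nil, add_zero] at hj
        rw [← hj, List.map_append, List.prod_append]
        simp
    _ = (μ.map f).prod * Fstar f [j] u +
          ∑ l ∈ range u, C (aCoef f [j] l) * (μ.map f).prod * f 1 ^ (j + l) := by
        rw [mul_add, mul_sum]
        congr 1
        exact sum_congr rfl fun l _ => by ring
    _ = (μ.map f).prod * Fstar f [j] u +
          ∑ l ∈ range u, C (aCoef f [j] l) * Fstar f μ (u - l) * f 1 ^ (j + l) +
          ∑ l ∈ range u, ∑ k ∈ range (u - l),
            C (aCoef f [j] l * aCoef f μ k) * f 1 ^ (μ.sum + j + (l + k)) := by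
        rw [sum_congr rfl hμexp, sum_add_distrib, add_assoc]
    _ = _ := by
        rw [← sum_range_diag_flip, List.sum_append, List.sum_singleton]
        congr 1
        refine sum_congr rfl fun m _ => ?_
        rw [map_sum, sum_mul]
        refine sum_congr rfl fun k hk => ?_
        rw [Nat.add_sub_cancel' (mem_range_succ_iff.1 hk)]

lemma Fstar_nil_succ (u : ℕ) : Fstar f [] (u + 1) = 0 := by
  induction u with
  | zero => simp [Fstar]
  | succ u ih => simp [Fstar_succ (u + 1), aCoef, ih]

lemma aCoef_singleton_zero {j : ℕ} (h : coeff (2 * j) (f j) = 1) : aCoef f [j] 0 = 1 := by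
  simpa [aCoef, Fstar] using h

lemma X_pow_dvd_prod {n : ℕ} (hlow : ∀ i, 1 ≤ i → i ≤ n → ∀ m, m < 2 * i → coeff m (f i) = 0)
    (hmem : ∀ i ∈ lam, 1 ≤ i ∧ i ≤ n) : X ^ (2 * lam.sum) ∣ (lam.map f).prod := by
  induction lam with
  | nil => simp
  | cons i lam ih =>
    obtain ⟨hi1, hin⟩ := hmem i List.mem_cons_self
    rw [List.map_cons, List.prod_cons, List.sum_cons, mul_add, pow_add]
    exact mul_dvd_mul (X_pow_dvd_iff.2 (hlow i hi1 hin))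
      (ih fun i hi => hmem i (List.mem_cons_of_mem _ hi))

lemma X_pow_dvd_Fstar_succ (h1 : X ^ 2 ∣ f 1) (h1' : coeff 2 (f 1) = 1) {u : ℕ}
    (h : X ^ (2 * (lam.sum + u)) ∣ Fstar f lam u) :
    X ^ (2 * (lam.sum + u) + 1) ∣ Fstar f lam (u + 1) := by
  refine X_pow_dvd_iff.2 fun m hm => ?_
  rw [Fstar_succ, map_sub, coeff_C_mul]
  rcases (Nat.lt_succ_iff.1 hm).lt_or_eq with hm | rfl
  · rw [X_pow_dvd_iff.1 h m hm, coeff_pow_eq_zero_of_lt h1 hm, mul_zero, sub_zero]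
  · rw [coeff_mul_pow_eq_one h1 h1', mul_one, aCoef, sub_self]

lemma X_pow_dvd_Fstar_of_coeff_odd (h1 : X ^ 2 ∣ f 1) (h1' : coeff 2 (f 1) = 1) {r : ℕ}
    (h0 : X ^ (2 * lam.sum) ∣ (lam.map f).prod)
    (hodd : ∀ u, 1 ≤ u → u ≤ r - 1 → coeff (2 * (lam.sum + u) - 1) (Fstar f lam u) = 0) :
    ∀ t ≤ r, X ^ (2 * (lam.sum + t) - 1) ∣ Fstar f lam t := by
  have hfull : ∀ t ≤ r - 1, X ^ (2 * (lam.sum + t)) ∣ Fstar f lam t := by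
    intro t ht
    induction t with
    | zero => exact h0
    | succ t ih =>
      have hsucc := X_pow_dvd_iff.1 (X_pow_dvd_Fstar_succ h1 h1' (ih (by omega)))
      refine X_pow_dvd_iff.2 fun m hm => ?_
      rcases Nat.lt_or_ge m (2 * (lam.sum + t) + 1) with hm' | hm'
      · exact hsucc m hm'
      · exact (show m = 2 * (lam.sum + (t + 1)) - 1 by omega) ▸ hodd (t + 1) (by omega) ht
  rintro (_ | t) ht
  · exact (pow_dvd_pow X (by omega)).trans h0
  · exact (show 2 * (lam.sum + t) + 1 = 2 * (lam.sum + (t + 1)) - 1 by omega) ▸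
      X_pow_dvd_Fstar_succ h1 h1' (hfull t (by omega))

lemma Fstar_eq_of_prod_eq_add_sum (h1 : X ^ 2 ∣ f 1) (h1' : coeff 2 (f 1) = 1) {u : ℕ}
    {G : ℂ⟦X⟧} {c : ℕ → ℂ} (hG : ∀ t < u, coeff (2 * (lam.sum + t)) G = 0)
    (h : (lam.map f).prod = G + ∑ k ∈ range u, C (c k) * f 1 ^ (lam.sum + k)) :
    Fstar f lam u = G := by
  suffices ∀ t ≤ u, Fstar f lam t = G + ∑ k ∈ Ico t u, C (c k) * f 1 ^ (lam.sum + k) by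
    simpa using this u le_rfl
  intro t ht
  induction t with
  | zero => rwa [← range_eq_Ico]
  | succ t ih =>
    have ih := ih (by omega)
    have ha : aCoef f lam t = c t := by
      rw [aCoef, ih, map_add, hG t ht, zero_add, map_sum,
        sum_eq_single_of_mem t (by simp; omega), coeff_C_mul, coeff_mul_pow_eq_one h1 h1', mul_one]
      intro k hk hkt
      rw [coeff_C_mul, coeff_pow_eq_zero_of_lt h1 (by simp at hk; omega), mul_zero]
    rw [Fstar_succ, ha, ih, sum_eq_sum_Ico_succ_bot (by omega)]
    abel

lemma X_pow_dvd_append_rhs (h1 : X ^ 2 ∣ f 1) {μ : List ℕ} {j u : ℕ}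
    (hμ0 : X ^ (2 * μ.sum) ∣ (μ.map f).prod)
    (hμ : ∀ t ≤ u, X ^ (2 * (μ.sum + t) - 1) ∣ Fstar f μ t)
    (hj : X ^ (2 * (j + u) - 1) ∣ Fstar f [j] u) :
    X ^ (2 * (μ.sum + j + u) - 1) ∣ (μ.map f).prod * Fstar f [j] u +
      ∑ l ∈ range u, C (aCoef f [j] l) * Fstar f μ (u - l) * f 1 ^ (j + l) := by
  have hmul {a b : ℕ} {g h : ℂ⟦X⟧} (hg : X ^ a ∣ g) (hh : X ^ b ∣ h) : X ^ (a + b) ∣ g * h :=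
    pow_add (X : ℂ⟦X⟧) a b ▸ mul_dvd_mul hg hh
  refine dvd_add ((pow_dvd_pow X (by omega)).trans (hmul hμ0 hj)) (dvd_sum fun l hl => ?_)
  have hl : l < u := mem_range.1 hl
  exact (pow_dvd_pow X (by omega)).trans
    (hmul ((hμ (u - l) (by omega)).mul_left _) (X_pow_mul_dvd_pow h1 (j + l)))

lemma Fstar_append_singleton_eq (h1 : X ^ 2 ∣ f 1) (h1' : coeff 2 (f 1) = 1) {μ : List ℕ}
    {j u : ℕ} (hμ0 : X ^ (2 * μ.sum) ∣ (μ.map f).prod)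
    (hμ : ∀ t ≤ u, X ^ (2 * (μ.sum + t) - 1) ∣ Fstar f μ t)
    (hj : X ^ (2 * (j + u) - 1) ∣ Fstar f [j] u) :
    Fstar f (μ ++ [j]) u = (μ.map f).prod * Fstar f [j] u +
      ∑ l ∈ range u, C (aCoef f [j] l) * Fstar f μ (u - l) * f 1 ^ (j + l) := by
  have hdvd := X_pow_dvd_append_rhs h1 hμ0 hμ hj
  refine Fstar_eq_of_prod_eq_add_sum h1 h1' (fun t ht => X_pow_dvd_iff.1 hdvd _ ?_)
    (prod_append_singleton_eq_add_sum μ j u)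
  rw [List.sum_append, List.sum_singleton]
  omega

lemma X_pow_dvd_Fstar_singleton {n r : ℕ} (h1 : X ^ 2 ∣ f 1) (h1' : coeff 2 (f 1) = 1)
    (hlow : ∀ i, 1 ≤ i → i ≤ n → ∀ m, m < 2 * i → coeff m (f i) = 0)
    (hvanish : ∀ i, 1 ≤ i → i ≤ n → ∀ u, 1 ≤ u → u ≤ r - 1 →
      coeff (2 * (i + u) - 1) (Fstar f [i] u) = 0)
    {j : ℕ} (hj1 : 1 ≤ j) (hjn : j ≤ n) : ∀ t ≤ r, X ^ (2 * (j + t) - 1) ∣ Fstar f [j] t := by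
  simpa using X_pow_dvd_Fstar_of_coeff_odd h1 h1' (lam := [j])
    (X_pow_dvd_prod hlow (by simp [hj1, hjn])) (by simpa using hvanish j hj1 hjn)

lemma X_pow_dvd_Fstar {n r : ℕ} (h1 : X ^ 2 ∣ f 1) (h1' : coeff 2 (f 1) = 1)
    (hlow : ∀ i, 1 ≤ i → i ≤ n → ∀ m, m < 2 * i → coeff m (f i) = 0)
    (hvanish : ∀ i, 1 ≤ i → i ≤ n → ∀ u, 1 ≤ u → u ≤ r - 1 →
      coeff (2 * (i + u) - 1) (Fstar f [i] u) = 0)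
    (hmem : ∀ i ∈ lam, 1 ≤ i ∧ i ≤ n) : ∀ t ≤ r, X ^ (2 * (lam.sum + t) - 1) ∣ Fstar f lam t := by
  induction lam using List.reverseRecOn with
  | nil =>
    rintro (_ | t) _
    · simp
    · simp [Fstar_nil_succ]
  | append_singleton μ j ih =>
    have hμ : ∀ i ∈ μ, 1 ≤ i ∧ i ≤ n := fun i hi => hmem i (by simp [hi])
    obtain ⟨hj1, hjn⟩ := hmem j (by simp)
    intro t ht
    have hμt : ∀ s ≤ t, X ^ (2 * (μ.sum + s) - 1) ∣ Fstar f μ s := fun s hs => ih hμ s (by omega)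
    have hjt := X_pow_dvd_Fstar_singleton h1 h1' hlow hvanish hj1 hjn t ht
    rw [Fstar_append_singleton_eq h1 h1' (X_pow_dvd_prod hlow hμ) hμt hjt, List.sum_append,
      List.sum_singleton]
    exact X_pow_dvd_append_rhs h1 (X_pow_dvd_prod hlow hμ) hμt hjt

lemma Fstar_append_singleton {n r u : ℕ} (h1 : X ^ 2 ∣ f 1) (h1' : coeff 2 (f 1) = 1)
    (hlead : ∀ i, 1 ≤ i → i ≤ n → coeff (2 * i) (f i) = 1)
    (hlow : ∀ i, 1 ≤ i → i ≤ n → ∀ m, m < 2 * i → coeff m (f i) = 0)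
    (hvanish : ∀ i, 1 ≤ i → i ≤ n → ∀ u, 1 ≤ u → u ≤ r - 1 →
      coeff (2 * (i + u) - 1) (Fstar f [i] u) = 0)
    (hu : 1 ≤ u) (hur : u ≤ r) {μ : List ℕ} {j : ℕ} (hμ : ∀ i ∈ μ, 1 ≤ i ∧ i ≤ n)
    (hj1 : 1 ≤ j) (hjn : j ≤ n) :
    Fstar f (μ ++ [j]) u = Fstar f μ u * f 1 ^ j + (μ.map f).prod * Fstar f [j] u +
      f 1 ^ j * ∑ l ∈ Icc 1 (u - 1), C (aCoef f [j] l) * Fstar f μ (u - l) * f 1 ^ l := by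
  obtain ⟨v, rfl⟩ := Nat.exists_eq_add_of_le' hu
  have hshift : ∑ l ∈ Icc 1 v, C (aCoef f [j] l) * Fstar f μ (v + 1 - l) * f 1 ^ (j + l) =
      f 1 ^ j * ∑ l ∈ Icc 1 v, C (aCoef f [j] l) * Fstar f μ (v + 1 - l) * f 1 ^ l := by
    rw [mul_sum]
    exact sum_congr rfl fun l _ => by ring
  rw [Fstar_append_singleton_eq h1 h1' (X_pow_dvd_prod hlow hμ)
      (fun t ht => X_pow_dvd_Fstar h1 h1' hlow hvanish hμ t (by omega))
      (X_pow_dvd_Fstar_singleton h1 h1' hlow hvanish hj1 hjn _ hur),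
    range_eq_Ico, sum_eq_sum_Ico_succ_bot (by omega : 0 < v + 1), zero_add,
    Ico_add_one_right_eq_Icc, hshift, aCoef_singleton_zero (hlead j hj1 hjn), map_one, one_mul,
    Nat.sub_zero, add_zero, Nat.add_sub_cancel]
  ring

lemma Fstar_take_add_one {n r : ℕ} (h1 : X ^ 2 ∣ f 1) (h1' : coeff 2 (f 1) = 1)
    (hlead : ∀ i, 1 ≤ i → i ≤ n → coeff (2 * i) (f i) = 1)
    (hlow : ∀ i, 1 ≤ i → i ≤ n → ∀ m, m < 2 * i → coeff m (f i) = 0)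
    (hvanish : ∀ i, 1 ≤ i → i ≤ n → ∀ u, 1 ≤ u → u ≤ r - 1 →
      coeff (2 * (i + u) - 1) (Fstar f [i] u) = 0)
    (hr : 1 ≤ r) (hmem : ∀ i ∈ lam, 1 ≤ i ∧ i ≤ n) {q : ℕ} (hq : q < lam.length) :
    Fstar f (lam.take (q + 1)) r * f 1 ^ (lam.sum - (lam.take (q + 1)).sum) -
        Fstar f (lam.take q) r * f 1 ^ (lam.sum - (lam.take q).sum) =
      ((lam.take q).map f).prod * Fstar f [lam.getD q 0] r *
          f 1 ^ (lam.sum - (lam.take (q + 1)).sum) +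
        f 1 ^ (lam.sum - (lam.take q).sum) * ∑ l ∈ Icc 1 (r - 1),
          C (aCoef f [lam.getD q 0] l) * Fstar f (lam.take q) (r - l) * f 1 ^ l := by
  have hget := List.getD_eq_getElem lam 0 hq
  have htake : lam.take (q + 1) = lam.take q ++ [lam.getD q 0] := by
    rw [hget, List.take_concat_get']
  obtain ⟨hj1, hjn⟩ := hmem _ (hget ▸ List.getElem_mem _)
  have hle : (lam.take (q + 1)).sum ≤ lam.sum :=
    (List.take_sublist _ _).sum_le_sum fun _ _ => Nat.zero_le _
  have hsum : lam.sum - (lam.take q).sum = lam.sum - (lam.take (q + 1)).sum + lam.getD q 0 := by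
    rw [htake, List.sum_append, List.sum_singleton] at hle ⊢
    omega
  rw [htake, Fstar_append_singleton h1 h1' hlead hlow hvanish hr le_rfl
    (fun i hi => hmem i (List.mem_of_mem_take hi)) hj1 hjn, ← htake, hsum, pow_add]
  ring

end Fstar

/-- if the hyperelliptic vanishing conditions of order `≤ r−1` hold
(the coefficient of `t^{2(i+u)−1}` in `F*_{i,u}` vanishes for `1 ≤ i ≤ n`,
`1 ≤ u ≤ r−1`), then for every nonempty sequence `λ = (i₁,…,i_s)` with entries in
`{1,…,n}` one has
`F*_{λ,r} = F*_{i₁,r}·f₁^{i_λ−i₁} + Σ_{q=2}^{s} ( f_{λ_{q−1}}·F*_{i_q,r}·f₁^{i_λ−i_{λ_q}}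
 + f₁^{i_λ−i_{λ_{q−1}}}·Σ_{l=1}^{r−1} a(i_q,l)·F*_{λ_{q−1},r−l}·f₁^{l} )`. -/
theorem stmt_8 (n : ℕ) (hn : 1 ≤ n) (f : ℕ → PowerSeries ℂ)
    (hlead : ∀ i, 1 ≤ i → i ≤ n → PowerSeries.coeff (R := ℂ) (2 * i) (f i) = 1)
    (hlow : ∀ i, 1 ≤ i → i ≤ n → ∀ m, m < 2 * i → PowerSeries.coeff (R := ℂ) m (f i) = 0)
    (r : ℕ) (hr : 1 ≤ r)
    (hvanish : ∀ i, 1 ≤ i → i ≤ n → ∀ u, 1 ≤ u → u ≤ r - 1 →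
      PowerSeries.coeff (R := ℂ) (2 * (i + u) - 1) (Fstar f [i] u) = 0)
    (lam : List ℕ) (hne : lam ≠ [])
    (hmem : ∀ i ∈ lam, 1 ≤ i ∧ i ≤ n) :
    Fstar f lam r =
      Fstar f [lam.getD 0 0] r * f 1 ^ (lam.sum - lam.getD 0 0) +
        ∑ q ∈ Finset.Icc 2 lam.length,
          (((lam.take (q - 1)).map f).prod * Fstar f [lam.getD (q - 1) 0] r *
              f 1 ^ (lam.sum - (lam.take q).sum) +
            f 1 ^ (lam.sum - (lam.take (q - 1)).sum) *
              ∑ l ∈ Finset.Icc 1 (r - 1),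
                PowerSeries.C (R := ℂ) (aCoef f [lam.getD (q - 1) 0] l) *
                  Fstar f (lam.take (q - 1)) (r - l) * f 1 ^ l) := by
  have h1 : X ^ 2 ∣ f 1 := X_pow_dvd_iff.2 (hlow 1 le_rfl hn)
  have h1' : coeff 2 (f 1) = 1 := hlead 1 le_rfl hn
  set Φ : ℕ → ℂ⟦X⟧ := fun q => Fstar f (lam.take q) r * f 1 ^ (lam.sum - (lam.take q).sum)
  have hfirst : Fstar f [lam.getD 0 0] r * f 1 ^ (lam.sum - lam.getD 0 0) = Φ 1 := by
    cases lam with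
    | nil => exact absurd rfl hne
    | cons i lam => simp [Φ]
  rw [hfirst, ← sub_eq_iff_eq_add', show Fstar f lam r = Φ lam.length by simp [Φ],
    ← sum_Icc_succ_sub_pred Φ (List.length_pos_iff.2 hne)]
  refine sum_congr rfl fun q hq => ?_
  obtain ⟨q, rfl⟩ : ∃ p, q = p + 1 := ⟨q - 1, by grind⟩
  simpa only [Φ, Nat.add_sub_cancel] using
    Fstar_take_add_one h1 h1' hlead hlow hvanish hr hmem (by grind)
end

section
/- Let r ≥ 1 and suppose the hyperelliptic vanishing conditions of order ≤ r hold, i.e. for every i ∈ {1, …, n} and every u with 1 ≤ u ≤ r the coefficient of t^{2(i+u)−1} in F*_{i,u} vanishes. Then for every finite sequence λ = (i_1, …, i_s) with entries in {1, …, n}, the series F*_{λ,r} has t-adic order at least 2(i_λ + r): the coefficient of t^m in F*_{λ,r} vanishes for every m < 2(i_λ + r). In particular the coefficient of t^{2(i_λ + r) − 1} in F*_{λ,r} vanishes, so non-singleton sequences λ produce no conditions beyond those coming from singletons. -/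
namespace PowerSeries

variable {R : Type*} [CommRing R] {p : R⟦X⟧}

theorem constantCoeff_aeval (hp : constantCoeff p = 0) (P : Polynomial R) :
    constantCoeff (Polynomial.aeval p P) = P.coeff 0 := by
  rw [Polynomial.aeval_def, Polynomial.hom_eval₂, hp, Polynomial.coeff_zero_eq_eval_zero]
  simp [Polynomial.eval]

theorem X_pow_two_mul_dvd_pow (hp : X ^ 2 ∣ p) (j : ℕ) : X ^ (2 * j) ∣ p ^ j := by
  rw [pow_mul]
  exact pow_dvd_pow_of_dvd hp j

theorem coeff_two_mul_pow_mul (hp : X ^ 2 ∣ p) (j : ℕ) (q : R⟦X⟧) :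
    coeff (2 * j) (p ^ j * q) = coeff 2 p ^ j * constantCoeff q := by
  obtain ⟨u, rfl⟩ := hp
  rw [mul_pow, ← pow_mul, mul_assoc]
  have hu : coeff 2 (X ^ 2 * u) = constantCoeff u := by simpa using coeff_X_pow_mul u 2 0
  simpa [hu] using coeff_X_pow_mul (u ^ j * q) (2 * j) 0

theorem coeff_two_mul_pow (hp : X ^ 2 ∣ p) (hp2 : coeff 2 p = 1) (j : ℕ) :
    coeff (2 * j) (p ^ j) = 1 := by
  simpa [hp2] using coeff_two_mul_pow_mul hp j 1

theorem X_pow_dvd_sub_C_mul_pow_sub_aeval_divX (hp : X ^ 2 ∣ p) (hp2 : coeff 2 p = 1)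
    {N j : ℕ} (hj : 2 * j < N) {G : R⟦X⟧} {P : Polynomial R}
    (h : X ^ N ∣ G - p ^ j * Polynomial.aeval p P) :
    X ^ N ∣ G - C (coeff (2 * j) G) * p ^ j - p ^ (j + 1) * Polynomial.aeval p P.divX := by
  have hp0 : constantCoeff p = 0 := by
    simpa using X_pow_dvd_iff.mp hp 0 (by norm_num)
  have hcoeff : coeff (2 * j) G = P.coeff 0 := by
    have := X_pow_dvd_iff.mp h (2 * j) hj
    rwa [map_sub, coeff_two_mul_pow_mul hp, hp2, one_pow, one_mul, constantCoeff_aeval hp0,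
      sub_eq_zero] at this
  have hP : Polynomial.aeval p P = C (P.coeff 0) + p * Polynomial.aeval p P.divX := by
    conv_lhs => rw [← P.X_mul_divX_add]
    rw [map_add, map_mul, Polynomial.aeval_X, Polynomial.aeval_C, add_comm]
    rfl
  rw [hcoeff]
  convert h using 1
  rw [hP]
  ring

def IsReductionBy (p : R⟦X⟧) (k : ℕ) (F : ℕ → R⟦X⟧) : Prop :=
  ∀ v, F (v + 1) = F v - C (coeff (2 * (k + v)) (F v)) * p ^ (k + v)

namespace IsReductionBy

variable {k : ℕ} {F : ℕ → R⟦X⟧}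

theorem exists_eq_sub_pow_mul_aeval (hF : IsReductionBy p k F) (v : ℕ) :
    ∃ Q : Polynomial R, F v = F 0 - p ^ k * Polynomial.aeval p Q := by
  induction v with
  | zero => exact ⟨0, by simp⟩
  | succ v ih =>
    obtain ⟨Q, hQ⟩ := ih
    refine ⟨Q + Polynomial.C (coeff (2 * (k + v)) (F v)) * Polynomial.X ^ v, ?_⟩
    rw [hF v, map_add, map_mul, Polynomial.aeval_C, map_pow, Polynomial.aeval_X, pow_add,
      ← C_eq_algebraMap]
    linear_combination hQ

theorem X_pow_dvd_of_coeff_odd_eq_zero (hF : IsReductionBy p k F) (hp : X ^ 2 ∣ p)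
    (hp2 : coeff 2 p = 1) (h0 : X ^ (2 * k) ∣ F 0) {r : ℕ}
    (hodd : ∀ u, 1 ≤ u → u ≤ r → coeff (2 * (k + u) - 1) (F u) = 0) :
    X ^ (2 * (k + r)) ∣ F r := by
  induction r with
  | zero => simpa using h0
  | succ v ih =>
    have hv : X ^ (2 * (k + v)) ∣ F v := ih fun u hu huv => hodd u hu (by omega)
    rw [X_pow_dvd_iff] at hv ⊢
    intro m hm
    rw [hF v, map_sub, coeff_C_mul]
    obtain hm' | rfl | rfl : m < 2 * (k + v) ∨ m = 2 * (k + v) ∨ m = 2 * (k + v) + 1 := by omega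
    · rw [hv m hm', X_pow_dvd_iff.mp (X_pow_two_mul_dvd_pow hp _) m hm', mul_zero, sub_zero]
    · rw [coeff_two_mul_pow hp hp2, mul_one, sub_self]
    · have := hodd (v + 1) (by omega) le_rfl
      rwa [show 2 * (k + (v + 1)) - 1 = 2 * (k + v) + 1 by omega, hF v, map_sub,
        coeff_C_mul] at this

theorem X_pow_dvd_of_dvd_sub_pow_mul_aeval (hF : IsReductionBy p k F) (hp : X ^ 2 ∣ p)
    (hp2 : coeff 2 p = 1) {r : ℕ} {P : Polynomial R}
    (h : X ^ (2 * (k + r)) ∣ F 0 - p ^ k * Polynomial.aeval p P) :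
    X ^ (2 * (k + r)) ∣ F r := by
  have key : ∀ v ≤ r,
      X ^ (2 * (k + r)) ∣ F v - p ^ (k + v) * Polynomial.aeval p (Polynomial.divX^[v] P) := by
    intro v
    induction v with
    | zero => simpa using h
    | succ v ih =>
      intro hv
      rw [hF v, Function.iterate_succ_apply', ← add_assoc]
      exact X_pow_dvd_sub_C_mul_pow_sub_aeval_divX hp hp2 (by omega) (ih (by omega))
  exact (dvd_sub_left (dvd_mul_of_dvd_left (X_pow_two_mul_dvd_pow hp (k + r)) _)).mp (key r le_rfl)

theorem exists_X_pow_dvd_sub_pow_mul_aeval (hF : IsReductionBy p k F) (hp : X ^ 2 ∣ p)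
    (hp2 : coeff 2 p = 1) (h0 : X ^ (2 * k) ∣ F 0) {r : ℕ}
    (hodd : ∀ u, 1 ≤ u → u ≤ r → coeff (2 * (k + u) - 1) (F u) = 0) :
    ∃ P : Polynomial R, X ^ (2 * (k + r)) ∣ F 0 - p ^ k * Polynomial.aeval p P := by
  obtain ⟨P, hP⟩ := hF.exists_eq_sub_pow_mul_aeval r
  exact ⟨P, hP ▸ hF.X_pow_dvd_of_coeff_odd_eq_zero hp hp2 h0 hodd⟩

end IsReductionBy

theorem X_pow_dvd_mul_sub_pow_mul_aeval (hp : X ^ 2 ∣ p) {k k' r : ℕ} {g g' : R⟦X⟧}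
    {P P' : Polynomial R} (h : X ^ (2 * (k + r)) ∣ g - p ^ k * Polynomial.aeval p P)
    (h' : X ^ (2 * (k' + r)) ∣ g' - p ^ k' * Polynomial.aeval p P') :
    X ^ (2 * (k + k' + r)) ∣ g * g' - p ^ (k + k') * Polynomial.aeval p (P * P') := by
  set A := p ^ k * Polynomial.aeval p P
  set A' := p ^ k' * Polynomial.aeval p P'
  have hA : X ^ (2 * k) ∣ A := dvd_mul_of_dvd_left (X_pow_two_mul_dvd_pow hp k) _
  have hg' : X ^ (2 * k') ∣ g' :=
    (dvd_sub_left (dvd_mul_of_dvd_left (X_pow_two_mul_dvd_pow hp k') _)).mp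
      (dvd_trans (pow_dvd_pow _ (by omega)) h')
  have hsplit :
      g * g' - p ^ (k + k') * Polynomial.aeval p (P * P') = (g - A) * g' + A * (g' - A') := by
    rw [map_mul, pow_add]
    ring
  rw [hsplit]
  refine dvd_add ?_ ?_
  · have := mul_dvd_mul h hg'
    rw [← pow_add] at this
    exact (pow_dvd_pow _ (by omega)).trans this
  · have := mul_dvd_mul hA h'
    rw [← pow_add] at this
    exact (pow_dvd_pow _ (by omega)).trans this

theorem exists_X_pow_dvd_prod_sub_pow_mul_aeval (hp : X ^ 2 ∣ p) (g : ℕ → R⟦X⟧) (r : ℕ)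
    (l : List ℕ)
    (hl : ∀ i ∈ l, ∃ P : Polynomial R, X ^ (2 * (i + r)) ∣ g i - p ^ i * Polynomial.aeval p P) :
    ∃ P : Polynomial R,
      X ^ (2 * (l.sum + r)) ∣ (l.map g).prod - p ^ l.sum * Polynomial.aeval p P := by
  induction l with
  | nil => exact ⟨1, by simp⟩
  | cons i l ih =>
    obtain ⟨P, hP⟩ := hl i List.mem_cons_self
    obtain ⟨Q, hQ⟩ := ih fun j hj => hl j (List.mem_cons_of_mem i hj)
    exact ⟨P * Q, by simpa using X_pow_dvd_mul_sub_pow_mul_aeval hp hP hQ⟩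

end PowerSeries

open PowerSeries

theorem isReductionBy_Fstar (f : ℕ → PowerSeries ℂ) (lam : List ℕ) :
    IsReductionBy (f 1) lam.sum (Fstar f lam) := fun _ => rfl

theorem stmt_11_general (n : ℕ) (hn : 1 ≤ n) (f : ℕ → PowerSeries ℂ)
    (hlead : ∀ i, 1 ≤ i → i ≤ n → PowerSeries.coeff (R := ℂ) (2 * i) (f i) = 1)
    (hlow : ∀ i, 1 ≤ i → i ≤ n → ∀ m, m < 2 * i → PowerSeries.coeff (R := ℂ) m (f i) = 0)
    (r : ℕ)
    (hvanish : ∀ i, 1 ≤ i → i ≤ n → ∀ u, 1 ≤ u → u ≤ r →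
      PowerSeries.coeff (R := ℂ) (2 * (i + u) - 1) (Fstar f [i] u) = 0)
    (lam : List ℕ)
    (hmem : ∀ i ∈ lam, 1 ≤ i ∧ i ≤ n) :
    ∀ m, m < 2 * (lam.sum + r) → PowerSeries.coeff (R := ℂ) m (Fstar f lam r) = 0 := by
  have hp : X ^ 2 ∣ f 1 := X_pow_dvd_iff.mpr (hlow 1 le_rfl hn)
  have hp2 : coeff 2 (f 1) = 1 := hlead 1 le_rfl hn
  have hsingle : ∀ i ∈ lam, ∃ P : Polynomial ℂ,
      X ^ (2 * (i + r)) ∣ f i - f 1 ^ i * Polynomial.aeval (f 1) P := by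
    intro i hi
    obtain ⟨hi1, hin⟩ := hmem i hi
    simpa [Fstar] using (isReductionBy_Fstar f [i]).exists_X_pow_dvd_sub_pow_mul_aeval hp hp2
      (by simpa [Fstar] using X_pow_dvd_iff.mpr (hlow i hi1 hin)) (hvanish i hi1 hin)
  obtain ⟨P, hP⟩ := exists_X_pow_dvd_prod_sub_pow_mul_aeval hp f r lam hsingle
  exact X_pow_dvd_iff.mp ((isReductionBy_Fstar f lam).X_pow_dvd_of_dvd_sub_pow_mul_aeval hp hp2 hP)

/-- if the hyperelliptic vanishing conditions of order `≤ r` hold,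
then for every nonempty sequence `λ = (i₁,…,i_s)` with entries in `{1,…,n}` the
series `F*_{λ,r}` has `t`-adic order at least `2(i_λ + r)`: all coefficients of
`t^m` with `m < 2(i_λ + r)` vanish (in particular that of `t^{2(i_λ+r)−1}`). -/
theorem stmt_11 (n : ℕ) (hn : 1 ≤ n) (f : ℕ → PowerSeries ℂ)
    (hlead : ∀ i, 1 ≤ i → i ≤ n → PowerSeries.coeff (R := ℂ) (2 * i) (f i) = 1)
    (hlow : ∀ i, 1 ≤ i → i ≤ n → ∀ m, m < 2 * i → PowerSeries.coeff (R := ℂ) m (f i) = 0)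
    (r : ℕ) (hr : 1 ≤ r)
    (hvanish : ∀ i, 1 ≤ i → i ≤ n → ∀ u, 1 ≤ u → u ≤ r →
      PowerSeries.coeff (R := ℂ) (2 * (i + u) - 1) (Fstar f [i] u) = 0)
    (lam : List ℕ) (hne : lam ≠ [])
    (hmem : ∀ i ∈ lam, 1 ≤ i ∧ i ≤ n) :
    ∀ m, m < 2 * (lam.sum + r) → PowerSeries.coeff (R := ℂ) m (Fstar f lam r) = 0 :=
  stmt_11_general n hn f hlead hlow r hvanish lam hmem
end

section
/- Let a, b, c be pairwise relatively prime positive integers, S = ⟨ab, ac, bc⟩, and 𝔠 := 2abc − ab − ac − bc + 1. If s ∈ S satisfies s < 𝔠 and s admits more than one factorization over {ab, ac, bc}, then every factorization (x', y', z') of s satisfies x' ≥ c or y' ≥ b or z' ≥ a; moreover, in that case exactly one of the three inequalities can hold for a given factorization, with x' < 2c, y' ≤ b−1, z' ≤ a−1 when x' ≥ c (and symmetrically in the other two cases). -/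
/-!
Reducing the coordinates of a factorization `(x, y, z)` modulo `c`, `b`, `a` gives
`s = (x % c)·ab + (y % b)·ac + (z % a)·bc + (x / c + y / b + z / a)·abc`.
By coprimality the residues `x % c`, `y % b`, `z % a` are determined by `s` alone, hence so is
the weight `x / c + y / b + z / a`. A factorization of weight `0` is its own residue triple, so
if `s` has two factorizations its weight is at least `1`; and `s < 𝔠 ≤ 2abc` forces it to be
at most `1`. Weight exactly `1` is the claimed trichotomy.
-/

theorem Nat.ModEq.of_mul_add_mul_eq_s15 {k c u u' t t' : ℕ} (hk : Nat.Coprime k c)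
    (h : u * k + t * c = u' * k + t' * c) : u ≡ u' [MOD c] := by
  refine Nat.ModEq.cancel_right_of_coprime hk.symm ?_
  simpa only [Nat.ModEq, Nat.add_mul_mod_self_right] using congrArg (· % c) h

section Factorization

variable {a b c x y z x₁ y₁ z₁ x₂ y₂ z₂ : ℕ}

theorem factorization_eq_residues_add_weight :
    x * (a * b) + y * (a * c) + z * (b * c) =
      x % c * (a * b) + y % b * (a * c) + z % a * (b * c)
        + (x / c + y / b + z / a) * (a * b * c) := by
  conv_lhs => rw [← Nat.mod_add_div x c, ← Nat.mod_add_div y b, ← Nat.mod_add_div z a]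
  ring

theorem residues_modEq_of_factorization_eq
    (hab : Nat.Coprime a b) (hac : Nat.Coprime a c) (hbc : Nat.Coprime b c)
    (h : x₁ * (a * b) + y₁ * (a * c) + z₁ * (b * c) = x₂ * (a * b) + y₂ * (a * c) + z₂ * (b * c)) :
    x₁ ≡ x₂ [MOD c] ∧ y₁ ≡ y₂ [MOD b] ∧ z₁ ≡ z₂ [MOD a] := by
  refine ⟨?_, ?_, ?_⟩
  · exact .of_mul_add_mul_eq (t := y₁ * a + z₁ * b) (t' := y₂ * a + z₂ * b)
      (Nat.Coprime.mul_left hac hbc) (by linarith)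
  · exact .of_mul_add_mul_eq (t := x₁ * a + z₁ * c) (t' := x₂ * a + z₂ * c)
      (Nat.Coprime.mul_left hab hbc.symm) (by linarith)
  · exact .of_mul_add_mul_eq (t := x₁ * b + y₁ * c) (t' := x₂ * b + y₂ * c)
      (Nat.Coprime.mul_left hab.symm hac.symm) (by linarith)

theorem weight_eq_of_factorization_eq (ha : 0 < a) (hb : 0 < b) (hc : 0 < c)
    (hab : Nat.Coprime a b) (hac : Nat.Coprime a c) (hbc : Nat.Coprime b c)
    (h : x₁ * (a * b) + y₁ * (a * c) + z₁ * (b * c) = x₂ * (a * b) + y₂ * (a * c) + z₂ * (b * c)) :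
    x₁ / c + y₁ / b + z₁ / a = x₂ / c + y₂ / b + z₂ / a := by
  obtain ⟨hx, hy, hz⟩ := residues_modEq_of_factorization_eq hab hac hbc h
  rw [factorization_eq_residues_add_weight, factorization_eq_residues_add_weight (x := x₂),
    hx, hy, hz] at h
  exact Nat.eq_of_mul_eq_mul_right (by positivity) (Nat.add_left_cancel h)

theorem one_le_weight_of_factorization_eq_of_ne (ha : 0 < a) (hb : 0 < b) (hc : 0 < c)
    (hab : Nat.Coprime a b) (hac : Nat.Coprime a c) (hbc : Nat.Coprime b c)
    (h : x₁ * (a * b) + y₁ * (a * c) + z₁ * (b * c) = x₂ * (a * b) + y₂ * (a * c) + z₂ * (b * c))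
    (hne : (x₁, y₁, z₁) ≠ (x₂, y₂, z₂)) :
    1 ≤ x₁ / c + y₁ / b + z₁ / a := by
  by_contra! hzero₁
  have hzero₂ := weight_eq_of_factorization_eq ha hb hc hab hac hbc h ▸ hzero₁
  simp only [Nat.lt_one_iff, Nat.add_eq_zero_iff, Nat.div_eq_zero_iff_lt ha,
    Nat.div_eq_zero_iff_lt hb, Nat.div_eq_zero_iff_lt hc] at hzero₁ hzero₂
  obtain ⟨hx, hy, hz⟩ := residues_modEq_of_factorization_eq hab hac hbc h
  apply hne
  rw [hx.eq_of_lt_of_lt hzero₁.1.1 hzero₂.1.1, hy.eq_of_lt_of_lt hzero₁.1.2 hzero₂.1.2,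
    hz.eq_of_lt_of_lt hzero₁.2 hzero₂.2]

theorem weight_lt_two_of_factorization_lt
    (h : x * (a * b) + y * (a * c) + z * (b * c) < 2 * (a * b * c)) :
    x / c + y / b + z / a < 2 := by
  refine Nat.lt_of_mul_lt_mul_right (a := a * b * c) (lt_of_le_of_lt ?_ h)
  rw [factorization_eq_residues_add_weight (x := x)]
  exact Nat.le_add_left _ _

theorem trichotomy_of_weight_eq_one (ha : 0 < a) (hb : 0 < b) (hc : 0 < c)
    (h : x / c + y / b + z / a = 1) :
    (c ≤ x ∧ ¬ b ≤ y ∧ ¬ a ≤ z ∧ x < 2 * c ∧ y ≤ b - 1 ∧ z ≤ a - 1) ∨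
      (b ≤ y ∧ ¬ c ≤ x ∧ ¬ a ≤ z ∧ y < 2 * b ∧ x ≤ c - 1 ∧ z ≤ a - 1) ∨
      (a ≤ z ∧ ¬ c ≤ x ∧ ¬ b ≤ y ∧ z < 2 * a ∧ x ≤ c - 1 ∧ y ≤ b - 1) := by
  have hx₀ := Nat.div_eq_zero_iff_lt hc (x := x)
  have hy₀ := Nat.div_eq_zero_iff_lt hb (x := y)
  have hz₀ := Nat.div_eq_zero_iff_lt ha (x := z)
  have hx₁ := Nat.div_eq_iff hc (x := x) (y := 1)
  have hy₁ := Nat.div_eq_iff hb (x := y) (y := 1)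
  have hz₁ := Nat.div_eq_iff ha (x := z) (y := 1)
  generalize x / c = p at *
  generalize y / b = q at *
  generalize z / a = r at *
  omega

end Factorization

/-- For pairwise coprime positive `a, b, c`, if `s ∈ S = ⟨ab, ac, bc⟩`
is below the conductor `𝔠 = 2abc − ab − ac − bc + 1` and admits more than one
factorization, then each factorization `(x', y', z')` of `s` satisfies `x' ≥ c` or
`y' ≥ b` or `z' ≥ a`, and exactly one of these can hold; moreover when `x' ≥ c` one
has `x' < 2c`, `y' ≤ b − 1`, `z' ≤ a − 1`, and symmetrically in the other cases. -/
theorem stmt_15 (a b c : ℕ) (ha : 0 < a) (hb : 0 < b) (hc : 0 < c)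
    (hab : Nat.Coprime a b) (hac : Nat.Coprime a c) (hbc : Nat.Coprime b c)
    (s : ℕ) (hs : (s : ℤ) < 2 * (a : ℤ) * b * c - a * b - a * c - b * c + 1)
    (hmulti : ∃ v w : ℕ × ℕ × ℕ, v ≠ w ∧
      v.1 * (a * b) + v.2.1 * (a * c) + v.2.2 * (b * c) = s ∧
      w.1 * (a * b) + w.2.1 * (a * c) + w.2.2 * (b * c) = s) :
    ∀ x' y' z' : ℕ, x' * (a * b) + y' * (a * c) + z' * (b * c) = s →
      ((c ≤ x' ∧ ¬ b ≤ y' ∧ ¬ a ≤ z' ∧ x' < 2 * c ∧ y' ≤ b - 1 ∧ z' ≤ a - 1) ∨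
       (b ≤ y' ∧ ¬ c ≤ x' ∧ ¬ a ≤ z' ∧ y' < 2 * b ∧ x' ≤ c - 1 ∧ z' ≤ a - 1) ∨
       (a ≤ z' ∧ ¬ c ≤ x' ∧ ¬ b ≤ y' ∧ z' < 2 * a ∧ x' ≤ c - 1 ∧ y' ≤ b - 1)) := by
  obtain ⟨⟨x₁, y₁, z₁⟩, ⟨x₂, y₂, z₂⟩, hne, h₁, h₂⟩ := hmulti
  dsimp only at h₁ h₂
  intro x y z h
  have hpos : 1 ≤ x₁ / c + y₁ / b + z₁ / a :=
    one_le_weight_of_factorization_eq_of_ne ha hb hc hab hac hbc (h₁.trans h₂.symm) hne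
  have hsame := weight_eq_of_factorization_eq ha hb hc hab hac hbc (h.trans h₁.symm)
  have hs₂ : s < 2 * (a * b * c) := by
    have : (0 : ℤ) < a * b := by positivity
    have : (0 : ℤ) ≤ a * c + b * c := by positivity
    zify
    linarith
  have hlt := weight_lt_two_of_factorization_lt (h ▸ hs₂)
  exact trichotomy_of_weight_eq_one ha hb hc (by omega)
end
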